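/- arXiv:1610.02962 — 3 statements merged into one kernel-verified Lean document; each statement's English description precedes it below -/
import Mathlib

section
/- The optimal value of the rank-constrained least-squares problem decomposes as: min over A ∈ ℝ^{n×n} with rank(A) ≤ k of ‖Y − A·X‖_F² equals (min over B ∈ ℝ^{n×m} with rank(B) ≤ k of ‖Z − B‖_F²) plus ‖Y·(I_m − Π)‖_F², where I_m is the m×m identity matrix. -/
open Matrix

noncomputable def frobNorm {p q : ℕ} (A : Matrix (Fin p) (Fin q) ℝ) : ℝ :=
  Real.sqrt (∑ i, ∑ j, (A i j) ^ 2)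

/-! `Π = G X` is a symmetric idempotent with `X Π = X`, so every matrix `M` splits orthogonally as
`M Π + M (I - Π)`. For `M = Y - A X` this gives `‖Y - A X‖² = ‖Z - A X‖² + ‖Y (I - Π)‖²`, while
replacing `B` by `B Π = (B G) X` never increases `‖Z - B‖²` and keeps `rank ≤ k`. Hence both
problems have the same attainable values up to the constant `‖Y (I - Π)‖²`. -/

lemma frobNorm_sq {p q : ℕ} (A : Matrix (Fin p) (Fin q) ℝ) :
    frobNorm A ^ 2 = ∑ i, ∑ j, A i j ^ 2 :=
  Real.sq_sqrt (by positivity)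

lemma frobNorm_add_sq_of_mul_transpose_eq_zero {p q : ℕ} {M N : Matrix (Fin p) (Fin q) ℝ}
    (h : M * Nᵀ = 0) : frobNorm (M + N) ^ 2 = frobNorm M ^ 2 + frobNorm N ^ 2 := by
  have hcross : ∑ i, ∑ j, M i j * N i j = 0 := by
    simpa [Matrix.trace, Matrix.mul_apply] using congrArg Matrix.trace h
  simp only [frobNorm_sq, Matrix.add_apply, add_sq, Finset.sum_add_distrib, ← Finset.mul_sum,
    mul_assoc, hcross]
  ring

section Projection

variable {p q : ℕ} {P : Matrix (Fin q) (Fin q) ℝ}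

lemma frobNorm_sq_eq_mul_add_mul_one_sub (hP : P * P = P) (hPt : Pᵀ = P)
    (M : Matrix (Fin p) (Fin q) ℝ) :
    frobNorm M ^ 2 = frobNorm (M * P) ^ 2 + frobNorm (M * (1 - P)) ^ 2 := by
  have horth : M * P * (M * (1 - P))ᵀ = 0 := by
    rw [transpose_mul, transpose_sub, transpose_one, hPt, Matrix.mul_assoc, ← Matrix.mul_assoc P,
      Matrix.mul_sub, hP, Matrix.mul_one, sub_self, Matrix.zero_mul, Matrix.mul_zero]
  rw [← frobNorm_add_sq_of_mul_transpose_eq_zero horth, ← Matrix.mul_add, add_sub_cancel,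
    Matrix.mul_one]

lemma frobNorm_mul_sq_le (hP : P * P = P) (hPt : Pᵀ = P) (M : Matrix (Fin p) (Fin q) ℝ) :
    frobNorm (M * P) ^ 2 ≤ frobNorm M ^ 2 := by
  rw [frobNorm_sq_eq_mul_add_mul_one_sub hP hPt M]
  exact le_add_of_nonneg_right (sq_nonneg _)

lemma frobNorm_sub_mul_sq {r : ℕ} (hP : P * P = P) (hPt : Pᵀ = P)
    {X : Matrix (Fin r) (Fin q) ℝ} (hXP : X * P = X)
    (Y : Matrix (Fin p) (Fin q) ℝ) (A : Matrix (Fin p) (Fin r) ℝ) :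
    frobNorm (Y - A * X) ^ 2 = frobNorm (Y * P - A * X) ^ 2 + frobNorm (Y * (1 - P)) ^ 2 := by
  have hMP : (Y - A * X) * P = Y * P - A * X := by rw [Matrix.sub_mul, Matrix.mul_assoc, hXP]
  have hMQ : (Y - A * X) * (1 - P) = Y * (1 - P) := by
    simp only [Matrix.mul_sub, Matrix.mul_one, hMP]
    abel
  rw [frobNorm_sq_eq_mul_add_mul_one_sub hP hPt (Y - A * X), hMP, hMQ]

end Projection

lemma csInf_eq_csInf_add_of_forall_exists {S T : Set ℝ} {c : ℝ} (hT : T.Nonempty)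
    (hTb : BddBelow T) (hST : ∀ s ∈ S, ∃ t ∈ T, t + c ≤ s) (hTS : ∀ t ∈ T, ∃ s ∈ S, s ≤ t + c) :
    sInf S = sInf T + c := by
  obtain ⟨t₀, ht₀⟩ := hT
  obtain ⟨s₀, hs₀, -⟩ := hTS t₀ ht₀
  have hSb : BddBelow S := by
    obtain ⟨b, hb⟩ := hTb
    refine ⟨b + c, fun s hs => ?_⟩
    obtain ⟨t, ht, hts⟩ := hST s hs
    linarith [hb ht]
  apply le_antisymm
  · rw [← sub_le_iff_le_add]
    refine le_csInf ⟨t₀, ht₀⟩ fun t ht => ?_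
    obtain ⟨s, hs, hst⟩ := hTS t ht
    linarith [csInf_le hSb hs]
  · refine le_csInf ⟨s₀, hs₀⟩ fun s hs => ?_
    obtain ⟨t, ht, hts⟩ := hST s hs
    linarith [csInf_le hTb ht]

theorem stmt_1_general (n m k : ℕ)
    (X Y : Matrix (Fin n) (Fin m) ℝ) (G : Matrix (Fin m) (Fin n) ℝ)
    (hG1 : X * G * X = X) (hG4 : (G * X)ᵀ = G * X) :
    sInf {e : ℝ | ∃ A : Matrix (Fin n) (Fin n) ℝ, A.rank ≤ k ∧
        e = frobNorm (Y - A * X) ^ 2} =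
      sInf {e : ℝ | ∃ B : Matrix (Fin n) (Fin m) ℝ, B.rank ≤ k ∧
        e = frobNorm (Y * (G * X) - B) ^ 2} +
      frobNorm (Y * (1 - G * X)) ^ 2 := by
  have hXP : X * (G * X) = X := by rw [← Matrix.mul_assoc, hG1]
  have hPP : G * X * (G * X) = G * X := by rw [Matrix.mul_assoc, hXP]
  refine csInf_eq_csInf_add_of_forall_exists ⟨_, 0, by simp, rfl⟩
    ⟨0, by rintro _ ⟨B, -, rfl⟩; positivity⟩ ?_ ?_
  · rintro _ ⟨A, hA, rfl⟩
    exact ⟨_, ⟨A * X, (rank_mul_le_left A X).trans hA, rfl⟩,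
      (frobNorm_sub_mul_sq hPP hG4 hXP Y A).ge⟩
  · rintro _ ⟨B, hB, rfl⟩
    refine ⟨_, ⟨B * G, (rank_mul_le_left B G).trans hB, rfl⟩, ?_⟩
    have hBP : (Y * (G * X) - B) * (G * X) = Y * (G * X) - B * G * X := by
      rw [Matrix.sub_mul, Matrix.mul_assoc Y, hPP, Matrix.mul_assoc B]
    rw [frobNorm_sub_mul_sq hPP hG4 hXP Y (B * G), ← hBP]
    exact (add_le_add_iff_right _).2 (frobNorm_mul_sq_le hPP hG4 _)

/-- Decomposition of the optimal value of the rank-constrained least-squares problem: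
`min_{rank A ≤ k} ‖Y - A X‖_F² = min_{rank B ≤ k} ‖Z - B‖_F² + ‖Y (I - Π)‖_F²`
where `Π = G X` and `Z = Y Π`. -/
theorem stmt_1 (n m k : ℕ) (hk : 0 < k) (hkm : k ≤ m) (hmn : m ≤ n)
    (X Y : Matrix (Fin n) (Fin m) ℝ) (G : Matrix (Fin m) (Fin n) ℝ)
    (hG1 : X * G * X = X) (hG2 : G * X * G = G)
    (hG3 : (X * G)ᵀ = X * G) (hG4 : (G * X)ᵀ = G * X) :
    sInf {e : ℝ | ∃ A : Matrix (Fin n) (Fin n) ℝ, A.rank ≤ k ∧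
        e = frobNorm (Y - A * X) ^ 2} =
      sInf {e : ℝ | ∃ B : Matrix (Fin n) (Fin m) ℝ, B.rank ≤ k ∧
        e = frobNorm (Y * (G * X) - B) ^ 2} +
      frobNorm (Y * (1 - G * X)) ^ 2 :=
  stmt_1_general n m k X Y G hG1 hG4
end

section
/- If X has full rank m, then the rank-constrained regression problem reduces to low-rank matrix approximation of Y: min over A ∈ ℝ^{n×n} with rank(A) ≤ k of ‖Y − A·X‖_F² equals min over B ∈ ℝ^{n×m} with rank(B) ≤ k of ‖Y − B‖_F². -/
open Matrix

/-!
A matrix `X` of full column rank has a left inverse `L`, so every `B` factors as `(B * L) * X`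
with `rank (B * L) ≤ rank B`. Hence the matrices `A * X` with `rank A ≤ k` are exactly the
matrices of rank at most `k`, and the two minimisation problems range over the same set of values.
-/

namespace Matrix

variable {l m n R : Type*} [Fintype m] [Fintype n]

theorem exists_mul_eq_one_of_rank_eq_card_width [Field R] [DecidableEq n] {X : Matrix m n R}
    (hX : X.rank = Fintype.card n) : ∃ L : Matrix n m R, L * X = 1 := by
  have hrange : LinearMap.range Xᵀ.mulVecLin = ⊤ := by
    apply Submodule.eq_top_of_finrank_eq
    rw [show Module.finrank R (LinearMap.range Xᵀ.mulVecLin) = Xᵀ.rank from rfl,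
      rank_transpose, hX, Module.finrank_fintype_fun_eq_card]
  have hsurj : Function.Surjective Xᵀ.mulVec := LinearMap.range_eq_top.mp hrange
  obtain ⟨B, hB⟩ := mulVec_surjective_iff_exists_right_inverse.mp hsurj
  exact ⟨Bᵀ, by rw [← transpose_transpose X, ← transpose_mul, hB, transpose_one]⟩

theorem exists_rank_le_mul_eq_iff [CommRing R] [StrongRankCondition R] [DecidableEq n] {X : Matrix m n R}
    {L : Matrix n m R} (hL : L * X = 1) (B : Matrix l n R) (k : ℕ) :
    (∃ A : Matrix l m R, A.rank ≤ k ∧ A * X = B) ↔ B.rank ≤ k := by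
  constructor
  · rintro ⟨A, hA, rfl⟩
    exact (rank_mul_le_left A X).trans hA
  · intro hB
    exact ⟨B * L, (rank_mul_le_left B L).trans hB, by rw [Matrix.mul_assoc, hL, Matrix.mul_one]⟩

end Matrix

theorem stmt_4_general (n m k : ℕ)
    (X Y : Matrix (Fin n) (Fin m) ℝ) (hX : X.rank = m) :
    sInf {e : ℝ | ∃ A : Matrix (Fin n) (Fin n) ℝ, A.rank ≤ k ∧
        e = frobNorm (Y - A * X) ^ 2} =
      sInf {e : ℝ | ∃ B : Matrix (Fin n) (Fin m) ℝ, B.rank ≤ k ∧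
        e = frobNorm (Y - B) ^ 2} := by
  obtain ⟨L, hL⟩ := exists_mul_eq_one_of_rank_eq_card_width (X := X) (by simpa using hX)
  congr 1
  ext e
  constructor
  · rintro ⟨A, hA, rfl⟩
    exact ⟨A * X, (exists_rank_le_mul_eq_iff hL _ k).mp ⟨A, hA, rfl⟩, rfl⟩
  · rintro ⟨B, hB, rfl⟩
    obtain ⟨A, hA, rfl⟩ := (exists_rank_le_mul_eq_iff hL B k).mpr hB
    exact ⟨A, hA, rfl⟩

/-- If `X` has full rank `m`, the rank-constrained regression problem reduces to low-rank
approximation of `Y`. -/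
theorem stmt_4 (n m k : ℕ) (hk : 0 < k) (hkm : k ≤ m) (hmn : m ≤ n)
    (X Y : Matrix (Fin n) (Fin m) ℝ) (hX : X.rank = m) :
    sInf {e : ℝ | ∃ A : Matrix (Fin n) (Fin n) ℝ, A.rank ≤ k ∧
        e = frobNorm (Y - A * X) ^ 2} =
      sInf {e : ℝ | ∃ B : Matrix (Fin n) (Fin m) ℝ, B.rank ≤ k ∧
        e = frobNorm (Y - B) ^ 2} :=
  stmt_4_general n m k X Y hX
end

section
/- The rank-constrained least-squares problem attains its minimum: there exists a matrix A₀ ∈ ℝ^{n×n} with rank(A₀) ≤ k such that ‖Y − A₀·X‖_F ≤ ‖Y − A·X‖_F for every A ∈ ℝ^{n×n} with rank(A) ≤ k. -/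
/-!
The set `{A * X | rank A ≤ k}` is closed: if `Z` is a generalised inverse of `X` (`X * Z * X = X`),
it consists of the matrices `B` of rank at most `k` with `B * Z * X = B`, since such a `B` equals
`(B * Z) * X`, and rank is lower semicontinuous. A nonempty closed subset of a finite-dimensional
normed space contains a point nearest to `Y`.
-/

open Matrix

theorem LinearMap.exists_comp_comp_eq_self {K V W : Type*} [DivisionRing K] [AddCommGroup V]
    [Module K V] [AddCommGroup W] [Module K W] (f : V →ₗ[K] W) :
    ∃ g : W →ₗ[K] V, f ∘ₗ g ∘ₗ f = f := by
  obtain ⟨s, hs⟩ := f.rangeRestrict.exists_rightInverse_of_surjective f.range_rangeRestrict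
  obtain ⟨p, hp⟩ := (range f).subtype.exists_leftInverse_of_injective (range f).ker_subtype
  refine ⟨s ∘ₗ p, ?_⟩
  calc f ∘ₗ (s ∘ₗ p) ∘ₗ f
      = (range f).subtype ∘ₗ (f.rangeRestrict ∘ₗ s) ∘ₗ
          (p ∘ₗ (range f).subtype) ∘ₗ f.rangeRestrict := rfl
    _ = f := by rw [hs, hp]; rfl

theorem Matrix.exists_mul_mul_eq_self {K m n : Type*} [Field K] [Fintype m] [Fintype n]
    [DecidableEq m] [DecidableEq n] (X : Matrix m n K) : ∃ Z : Matrix n m K, X * Z * X = X := by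
  obtain ⟨g, hg⟩ := (toLin' X).exists_comp_comp_eq_self
  refine ⟨LinearMap.toMatrix' g, toLin'.injective ?_⟩
  simpa only [toLin'_mul, toLin'_toMatrix', LinearMap.comp_assoc] using hg

section Topology

variable {𝕜 l m n : Type*} [NontriviallyNormedField 𝕜] [CompleteSpace 𝕜]
  [Fintype l] [Fintype m] [Fintype n]

theorem Matrix.isClosed_setOf_rank_le [DecidableEq n] (k : ℕ) :
    IsClosed {A : Matrix m n 𝕜 | A.rank ≤ k} := by
  let L : Matrix m n 𝕜 →ₗ[𝕜] (n → 𝕜) →L[𝕜] (m → 𝕜) :=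
    LinearMap.toContinuousLinearMap.toLinearMap ∘ₗ toLin'.toLinearMap
  have hrank : {A : Matrix m n 𝕜 | A.rank ≤ k} =
      L ⁻¹' {f | ((k + 1 : ℕ) : Cardinal) ≤ (f : (n → 𝕜) →ₗ[𝕜] (m → 𝕜)).rank}ᶜ := by
    ext A
    change A.rank ≤ k ↔ ¬ ((k + 1 : ℕ) : Cardinal) ≤ (toLin' A).rank
    rw [LinearMap.rank, ← Module.finrank_eq_rank, Nat.cast_le, not_le, Nat.lt_succ_iff]
    rfl
  rw [hrank]
  exact (isOpen_setOfPred_nat_le_rank (k + 1)).isClosed_compl.preimage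
    L.continuous_of_finiteDimensional

theorem Matrix.isClosed_image_mul_right_setOf_rank_le [DecidableEq m]
    [DecidableEq n] (X : Matrix m n 𝕜) (k : ℕ) :
    IsClosed ((· * X) '' {A : Matrix l m 𝕜 | A.rank ≤ k}) := by
  obtain ⟨Z, hZ⟩ := X.exists_mul_mul_eq_self
  have himage : (· * X) '' {A : Matrix l m 𝕜 | A.rank ≤ k} =
      {B | B.rank ≤ k} ∩ {B | B * Z * X = B} := by
    ext B
    constructor
    · rintro ⟨A, hA, rfl⟩
      refine ⟨(rank_mul_le_left A X).trans hA, ?_⟩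
      change A * X * Z * X = A * X
      rw [Matrix.mul_assoc A, Matrix.mul_assoc A, hZ]
    · rintro ⟨hB, hBZX⟩
      exact ⟨B * Z, (rank_mul_le_left B Z).trans hB, hBZX⟩
  rw [himage]
  exact (isClosed_setOf_rank_le k).inter
    (isClosed_eq ((continuous_id.matrix_mul continuous_const).matrix_mul continuous_const)
      continuous_id)

end Topology

section Frobenius

attribute [local instance] Matrix.frobeniusNormedAddCommGroup Matrix.frobeniusNormedSpace

theorem frobNorm_eq_norm {p q : ℕ} (A : Matrix (Fin p) (Fin q) ℝ) : frobNorm A = ‖A‖ := by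
  simp only [frobNorm, frobenius_norm_def, Real.norm_eq_abs, Real.rpow_two, sq_abs,
    Real.sqrt_eq_rpow]

theorem stmt_6_general (n m k : ℕ)
    (X Y : Matrix (Fin n) (Fin m) ℝ) :
    ∃ A₀ : Matrix (Fin n) (Fin n) ℝ, A₀.rank ≤ k ∧
      ∀ A : Matrix (Fin n) (Fin n) ℝ, A.rank ≤ k →
        frobNorm (Y - A₀ * X) ≤ frobNorm (Y - A * X) := by
  set S := (· * X) '' {A : Matrix (Fin n) (Fin n) ℝ | A.rank ≤ k}
  have hS : S.Nonempty := ⟨0 * X, 0, by simp, rfl⟩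
  obtain ⟨_, ⟨A₀, hA₀, rfl⟩, hnearest⟩ :=
    (isClosed_image_mul_right_setOf_rank_le X k).exists_infDist_eq_dist hS Y
  refine ⟨A₀, hA₀, fun A hA => ?_⟩
  simp only [frobNorm_eq_norm, ← dist_eq_norm, ← hnearest]
  exact Metric.infDist_le_dist_of_mem ⟨A, hA, rfl⟩

/-- Existence of a minimiser of the rank-constrained least-squares problem. -/
theorem stmt_6 (n m k : ℕ) (hk : 0 < k) (hkm : k ≤ m) (hmn : m ≤ n)
    (X Y : Matrix (Fin n) (Fin m) ℝ) :
    ∃ A₀ : Matrix (Fin n) (Fin n) ℝ, A₀.rank ≤ k ∧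
      ∀ A : Matrix (Fin n) (Fin n) ℝ, A.rank ≤ k →
        frobNorm (Y - A₀ * X) ≤ frobNorm (Y - A * X) :=
  stmt_6_general n m k X Y

end Frobenius
end
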